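/- arXiv:2003.04738 — 2 statements merged into one kernel-verified Lean document; each statement's English description precedes it below -/
import Mathlib

section
/- Let H be a locally compact, Hausdorff, totally disconnected topological group and let N ⊆ H be a compact subgroup. Then N equals the intersection of all open compact subgroups J of H containing N. -/
/-!
Let `x ∉ N`. By van Dantzig's theorem there is a compact open subgroup `K` disjoint from `N x`.
The intersection `L` of the `N`-conjugates of `K` is normalized by `N`, and it is still open
because `N` is compact (tube lemma). Hence `N L` is a compact open subgroup containing `N` but
not `x`.
-/

open Set Filter Topology
open scoped Pointwise

section IsTopologicalGroup

variable {G : Type*} [Group G] [TopologicalSpace G] [IsTopologicalGroup G]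

/-- If `W * V ⊆ W` for a neighbourhood `V` of `1`, the subgroup generated by `V ∩ V⁻¹` is open
and, as `1 ∈ W`, stays inside `W` (van Dantzig's argument). -/
theorem exists_isOpen_subgroup_subset_of_isCompact_of_isOpen {W : Set G} (hWc : IsCompact W)
    (hWo : IsOpen W) (h1 : (1 : G) ∈ W) :
    ∃ K : Subgroup G, IsOpen (K : Set G) ∧ (K : Set G) ⊆ W := by
  obtain ⟨V, hV, hWV⟩ := compact_open_separated_mul_right hWc hWo subset_rfl
  have hmul : ∀ g ∈ V, ∀ w ∈ W, w * g ∈ W := fun g hg w hw ↦ hWV (mul_mem_mul hw hg)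
  have stable : ∀ g ∈ Subgroup.closure (V ∩ V⁻¹), ∀ w ∈ W, w * g ∈ W := by
    intro g hg
    induction hg using Subgroup.closure_induction_left with
    | one => simp
    | mul_left x hx y _ ih => exact fun w hw ↦ mul_assoc w x y ▸ ih _ (hmul x hx.1 w hw)
    | inv_mul_cancel x hx y _ ih => exact fun w hw ↦ mul_assoc w x⁻¹ y ▸ ih _ (hmul _ hx.2 w hw)
  refine ⟨Subgroup.closure (V ∩ V⁻¹), Subgroup.isOpen_of_mem_nhds _ (g := 1) ?_, fun g hg ↦ ?_⟩
  · exact mem_of_superset (inter_mem hV (inv_mem_nhds_one G hV)) Subgroup.subset_closure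
  · simpa using stable g hg 1 h1

theorem exists_isOpen_isCompact_subgroup_subset [LocallyCompactSpace G] [T2Space G]
    [TotallyDisconnectedSpace G] {U : Set G} (hU : IsOpen U) (h1 : (1 : G) ∈ U) :
    ∃ K : Subgroup G, IsOpen (K : Set G) ∧ IsCompact (K : Set G) ∧ (K : Set G) ⊆ U := by
  obtain ⟨s, hsc, hs1, hsU⟩ := exists_compact_subset hU h1
  obtain ⟨W, hW, hW1, hWs⟩ :=
    loc_compact_Haus_tot_disc_of_zero_dim.mem_nhds_iff.mp (isOpen_interior.mem_nhds hs1)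
  have hWc : IsCompact W := hsc.of_isClosed_subset hW.isClosed (hWs.trans interior_subset)
  obtain ⟨K, hKo, hKW⟩ := exists_isOpen_subgroup_subset_of_isCompact_of_isOpen hWc hW.isOpen hW1
  exact ⟨K, hKo, hWc.of_isClosed_subset (K.isClosed_of_isOpen hKo) hKW,
    hKW.trans (hWs.trans (interior_subset.trans hsU))⟩

theorem exists_isOpen_subgroup_le_normalizer {N K : Subgroup G} (hN : IsCompact (N : Set G))
    (hK : IsOpen (K : Set G)) :
    ∃ L : Subgroup G, IsOpen (L : Set G) ∧ L ≤ K ∧ N ≤ Subgroup.normalizer (L : Set G) := by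
  set L := ⨅ n : N, K.comap (MulAut.conj (n : G)).toMonoidHom
  have mem_L : ∀ h, h ∈ L ↔ ∀ n ∈ N, n * h * n⁻¹ ∈ K := by
    simp [L, Subgroup.mem_iInf, MulAut.conj_apply]
  have hL1 : ∀ᶠ h in 𝓝 (1 : G), ∀ n ∈ N, n * h * n⁻¹ ∈ K := by
    refine hN.eventually_forall_of_forall_eventually fun n _ ↦ ?_
    have hconj : Continuous fun z : G × G ↦ z.2 * z.1 * z.2⁻¹ := by fun_prop
    exact hconj.continuousAt.preimage_mem_nhds (by simpa using hK.mem_nhds K.one_mem)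
  refine ⟨L, L.isOpen_of_mem_nhds (g := 1) (hL1.mono fun h hh ↦ (mem_L h).mpr hh),
    fun h hh ↦ by simpa using (mem_L h).mp hh 1 N.one_mem, fun n hn ↦ ?_⟩
  refine Subgroup.mem_normalizer_iff.mpr fun h ↦ ⟨fun hh ↦ (mem_L _).mpr fun m hm ↦ ?_,
    fun hh ↦ (mem_L _).mpr fun m hm ↦ ?_⟩
  · simpa [mul_assoc] using (mem_L h).mp hh (m * n) (N.mul_mem hm hn)
  · simpa [mul_assoc] using (mem_L _).mp hh (m * n⁻¹) (N.mul_mem hm (N.inv_mem hn))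

theorem exists_isOpen_isCompact_subgroup_notMem [LocallyCompactSpace G] [T2Space G]
    [TotallyDisconnectedSpace G] {N : Subgroup G} (hN : IsCompact (N : Set G)) {x : G}
    (hx : x ∉ N) :
    ∃ J : Subgroup G, IsOpen (J : Set G) ∧ IsCompact (J : Set G) ∧ N ≤ J ∧ x ∉ J := by
  have hNx : IsClosed ((N : Set G) * {x}) := (hN.mul isCompact_singleton).isClosed
  have h1 : (1 : G) ∉ (N : Set G) * {x} := by
    rintro ⟨n, hn, _, rfl, hnx⟩
    exact hx (eq_inv_of_mul_eq_one_right hnx ▸ N.inv_mem hn)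
  obtain ⟨K, hKo, hKc, hKNx⟩ := exists_isOpen_isCompact_subgroup_subset hNx.isOpen_compl h1
  obtain ⟨L, hLo, hLK, hNL⟩ := exists_isOpen_subgroup_le_normalizer hN hKo
  have hLc : IsCompact (L : Set G) := hKc.of_isClosed_subset (L.isClosed_of_isOpen hLo) hLK
  have hJ : ((N ⊔ L : Subgroup G) : Set G) = N * L :=
    Subgroup.coe_mul_of_left_le_normalizer_right N L hNL
  refine ⟨N ⊔ L, Subgroup.isOpen_mono le_sup_right hLo, hJ ▸ hN.mul hLc, le_sup_left, ?_⟩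
  rw [← SetLike.mem_coe, hJ]
  rintro ⟨n, hn, l, hl, rfl⟩
  exact hKNx (hLK hl) ⟨n⁻¹, N.inv_mem hn, n * l, rfl, inv_mul_cancel_left n l⟩

end IsTopologicalGroup

/-- In a locally compact, Hausdorff, totally disconnected topological group,
a compact subgroup equals the intersection of all open compact subgroups containing it. -/
theorem compact_subgroup_eq_iInter_open_compact_subgroups
    {H : Type*} [Group H] [TopologicalSpace H] [IsTopologicalGroup H]
    [LocallyCompactSpace H] [T2Space H] [TotallyDisconnectedSpace H]
    (N : Subgroup H) (hN : IsCompact (N : Set H)) :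
    (N : Set H) =
      ⋂ J ∈ {J : Subgroup H | IsOpen (J : Set H) ∧ IsCompact (J : Set H) ∧ N ≤ J},
        (J : Set H) := by
  refine (subset_iInter₂ fun J hJ ↦ hJ.2.2).antisymm fun x hx ↦ by_contra fun hxN ↦ ?_
  obtain ⟨J, hJo, hJc, hNJ, hxJ⟩ := exists_isOpen_isCompact_subgroup_notMem hN hxN
  exact hxJ (mem_iInter₂.mp hx J ⟨hJo, hJc, hNJ⟩)
end

section
/- Let t : ℤ → ℤ be a function satisfying: t is strictly decreasing, t(t(i)) = i for all i, and t(i + qr) = t(i) − qr for all i, q ∈ ℤ and a fixed positive integer r. Then there exists a ∈ ℤ with t(i) = −i − a for all i, and there is a unique i₀ ∈ ℤ with i₀ − t(i₀) ∈ {0, 1}. -/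
/-!
`i ↦ t i + i` is antitone, because `t` drops by at least one at each step, and it is periodic
of period `r`; an antitone periodic function is constant, so `t i = -i - a`. Then
`i - t i = 2 * i + a`, which takes the value `0` or `1` exactly once.
-/

open Function

theorem Antitone.eq_of_periodic {G α : Type*} [AddCommGroup G] [LinearOrder G]
    [IsOrderedAddMonoid G] [Archimedean G] [PartialOrder α] {f : G → α} {c : G}
    (hf : Antitone f) (hc : 0 < c) (hp : Periodic f c) (x y : G) : f x = f y := by
  obtain ⟨n, hn⟩ := Archimedean.arch |x - y| hc
  obtain ⟨hlower, hupper⟩ := abs_le.mp hn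
  refine le_antisymm ?_ ?_
  · calc f x = f (x + n • c) := ((hp.nsmul n) x).symm
      _ ≤ f y := hf (neg_le_sub_iff_le_add.mp hlower)
  · calc f y ≤ f (x - n • c) := hf (sub_le_comm.mp hupper)
      _ = f x := (hp.nsmul n).sub_eq x

theorem StrictAnti.antitone_add_self {f : ℤ → ℤ} (hf : StrictAnti f) :
    Antitone fun i => f i + i :=
  antitone_int_of_succ_le fun i => by
    have := hf (Int.lt_succ i)
    omega

theorem Int.existsUnique_two_mul_add_eq_zero_or_one (a : ℤ) :
    ∃! i : ℤ, 2 * i + a = 0 ∨ 2 * i + a = 1 :=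
  ⟨-(a / 2), by omega, fun i _ => by omega⟩

theorem strictAnti_involution_eq_neg_sub_general
    (r : ℤ) (hr : 0 < r) (t : ℤ → ℤ) (ht : StrictAnti t)
    (hper : ∀ i q, t (i + q * r) = t i - q * r) :
    (∃ a : ℤ, ∀ i, t i = -i - a) ∧
      (∃! i₀ : ℤ, i₀ - t i₀ = 0 ∨ i₀ - t i₀ = 1) := by
  have hperiodic : Periodic (fun i => t i + i) r := fun i => by
    have := hper i 1
    rw [one_mul] at this
    change t (i + r) + (i + r) = t i + i
    omega
  have hform : ∀ i, t i = -i - -t 0 := fun i => by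
    have := ht.antitone_add_self.eq_of_periodic hr hperiodic i 0
    omega
  have hdiff : ∀ i, i - t i = 2 * i + -t 0 := fun i => by
    rw [hform i]
    ring
  refine ⟨⟨-t 0, hform⟩, ?_⟩
  simpa only [hdiff] using Int.existsUnique_two_mul_add_eq_zero_or_one (-t 0)

/-- A strictly decreasing involution `t : ℤ → ℤ` with `t (i + q*r) = t i - q*r`
(for a fixed positive integer `r`) is of the form `t i = -i - a`, and there is a unique
`i₀` with `i₀ - t i₀ ∈ {0, 1}`. -/
theorem strictAnti_involution_eq_neg_sub
    (r : ℤ) (hr : 0 < r) (t : ℤ → ℤ) (ht : StrictAnti t)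
    (hinv : ∀ i, t (t i) = i)
    (hper : ∀ i q, t (i + q * r) = t i - q * r) :
    (∃ a : ℤ, ∀ i, t i = -i - a) ∧
      (∃! i₀ : ℤ, i₀ - t i₀ = 0 ∨ i₀ - t i₀ = 1) :=
  strictAnti_involution_eq_neg_sub_general r hr t ht hper
end
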